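/- Let G be a Class 2 graph with critical edge e₁ = y₀y₁, φ ∈ C^Δ(G − e₁), and let K = (y₀, e₁, y₁, e₂, y₂, e₃, y₃) be a Kierstead path with respect to e₁ and φ. If min{d_G(y₁), d_G(y₂)} < Δ, then V(K) = {y₀, y₁, y₂, y₃} is φ-elementary. -/

import Mathlib

open SimpleGraph

/-- A proper `k`-edge-coloring of `G` with colors in `{1,…,k}`: every edge receives a color
in `{1,…,k}` and distinct edges sharing a vertex receive distinct colors. -/
def IsProperEdgeColoring {V : Type*} (G : SimpleGraph V) (k : ℕ) (c : Sym2 V → ℕ) : Prop :=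
  (∀ e ∈ G.edgeSet, c e ∈ Finset.Icc 1 k) ∧
  ∀ e ∈ G.edgeSet, ∀ f ∈ G.edgeSet, e ≠ f → (∃ v, v ∈ e ∧ v ∈ f) → c e ≠ c f

/-- `G` admits a proper `k`-edge-coloring. -/
def EdgeColorable {V : Type*} (G : SimpleGraph V) (k : ℕ) : Prop :=
  ∃ c, IsProperEdgeColoring G k c

/-- The chromatic index of `G`: the least `k` such that `G` is `k`-edge-colorable. -/
noncomputable def chromIndex {V : Type*} (G : SimpleGraph V) : ℕ :=
  sInf {k | EdgeColorable G k}


/-- The set of colors of `{1,…,k}` missing at `v` under the coloring `c`, i.e. not assigned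
to any edge of `G` incident with `v`. -/
def missing {V : Type*} (G : SimpleGraph V) (k : ℕ) (c : Sym2 V → ℕ) (v : V) : Set ℕ :=
  {α | α ∈ Finset.Icc 1 k ∧ ¬ ∃ u, G.Adj v u ∧ c s(v, u) = α}

/-!
Since `G` is not `Δ`-edge-colorable, no color is missing at both ends of the uncolored edge
`y₀y₁`, and for `a` missing at `y₀` and `b` missing at `y₁` the `(a, b)`-Kempe chain from `y₀`
ends at `y₁`. Kempe chains are paths, so a third vertex missing `a` or `b` lies on another chain,
and swapping that chain preserves the Kierstead path. Any other pair of path vertices sharing a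
missing color is thereby reduced, through recolorings, Kempe swaps and the shift that moves the
color of `y₁y₂` to `y₀y₁`, to a coloring with a color missing at both `y₀` and `y₁`. The pairs
involving `y₃` need a second missing color at `y₁` or at `y₂`, which `min(d(y₁), d(y₂)) < Δ`
provides.
-/

section

variable {V : Type*} {G H : SimpleGraph V} {k : ℕ} {c c₁ c₂ : Sym2 V → ℕ} {α a b : ℕ}
  {t p q : V}

theorem color_ne_of_mem_missing (hα : α ∈ missing H k c t) (h : H.Adj t q) : c s(t, q) ≠ α :=
  fun he => hα.2 ⟨q, h, he⟩

theorem color_ne_of_mem_missing' (hα : α ∈ missing H k c t) (h : H.Adj q t) :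
    c s(q, t) ≠ α := by
  rw [Sym2.eq_swap]
  exact color_ne_of_mem_missing hα h.symm

theorem deleteEdges_adj_of_notMem {u v : V} (h : G.Adj p q) (hu : u ∉ s(p, q)) :
    (G.deleteEdges {s(u, v)}).Adj p q :=
  deleteEdges_adj.mpr ⟨h, fun he => hu (he ▸ Sym2.mem_mk_left u v)⟩

theorem missing_congr (h : ∀ q, H.Adj t q → c₁ s(t, q) = c₂ s(t, q)) :
    missing H k c₁ t = missing H k c₂ t := by
  ext α
  refine and_congr_right fun _ => not_congr ⟨?_, ?_⟩ <;> rintro ⟨q, hq, rfl⟩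
  exacts [⟨q, hq, (h q hq).symm⟩, ⟨q, hq, h q hq⟩]

theorem missing_anti {H' : SimpleGraph V} (h : H' ≤ H) :
    missing H k c t ⊆ missing H' k c t :=
  fun _ hα => ⟨hα.1, fun ⟨q, hq, he⟩ => hα.2 ⟨q, h hq, he⟩⟩

theorem isProperEdgeColoring_iff :
    IsProperEdgeColoring H k c ↔ (∀ p q, H.Adj p q → c s(p, q) ∈ Finset.Icc 1 k) ∧
      ∀ t p q, H.Adj t p → H.Adj t q → p ≠ q → c s(t, p) ≠ c s(t, q) := by
  refine ⟨fun hc => ⟨fun p q h => hc.1 _ h, fun t p q hp hq hpq => ?_⟩, fun ⟨h₁, h₂⟩ => ⟨?_, ?_⟩⟩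
  · exact hc.2 _ hp _ hq (by rwa [Ne, Sym2.congr_right]) ⟨t, Sym2.mem_mk_left _ _,
      Sym2.mem_mk_left _ _⟩
  · intro e he
    induction e using Sym2.ind
    exact h₁ _ _ he
  · rintro e he f hf hne ⟨t, hte, htf⟩
    obtain ⟨p, rfl⟩ := Sym2.mem_iff_exists.mp hte
    obtain ⟨q, rfl⟩ := Sym2.mem_iff_exists.mp htf
    exact h₂ t p q he hf (by rintro rfl; exact hne rfl)

namespace IsProperEdgeColoring

theorem eq_of_color_eq (hc : IsProperEdgeColoring H k c) (hp : H.Adj t p) (hq : H.Adj t q)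
    (h : c s(t, p) = c s(t, q)) : p = q :=
  by_contra fun hpq => (isProperEdgeColoring_iff.mp hc).2 t p q hp hq hpq h

theorem mono {H' : SimpleGraph V} (hc : IsProperEdgeColoring H k c) (h : H' ≤ H) :
    IsProperEdgeColoring H' k c :=
  ⟨fun e he => hc.1 e (edgeSet_subset_edgeSet.mpr h he),
    fun e he f hf => hc.2 e (edgeSet_subset_edgeSet.mpr h he) f (edgeSet_subset_edgeSet.mpr h hf)⟩

theorem update [DecidableEq V] (hc : IsProperEdgeColoring (G.deleteEdges {s(p, q)}) k c)
    (hp : α ∈ missing (G.deleteEdges {s(p, q)}) k c p)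
    (hq : α ∈ missing (G.deleteEdges {s(p, q)}) k c q) :
    IsProperEdgeColoring G k (Function.update c s(p, q) α) := by
  obtain ⟨h₁, h₂⟩ := isProperEdgeColoring_iff.mp hc
  have hmiss : ∀ t ∈ s(p, q), α ∈ missing (G.deleteEdges {s(p, q)}) k c t := by
    intro t ht
    rcases Sym2.mem_iff.mp ht with rfl | rfl
    exacts [hp, hq]
  have key : ∀ t r r', G.Adj t r → G.Adj t r' → r ≠ r' → s(t, r) = s(p, q) →
      Function.update c s(p, q) α s(t, r) ≠ Function.update c s(p, q) α s(t, r') := by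
    intro t r r' _ hr' hrr' he
    have hne : s(t, r') ≠ s(p, q) := by rwa [← he, Ne, Sym2.congr_right, eq_comm]
    rw [he, Function.update_self, Function.update_of_ne hne]
    exact (color_ne_of_mem_missing (hmiss t (he ▸ Sym2.mem_mk_left t r))
      (deleteEdges_adj.mpr ⟨hr', hne⟩)).symm
  refine isProperEdgeColoring_iff.mpr ⟨fun r r' hr => ?_, fun t r r' hr hr' hrr' => ?_⟩
  · by_cases he : s(r, r') = s(p, q)
    · rw [he, Function.update_self]
      exact hp.1
    · rw [Function.update_of_ne he]
      exact h₁ r r' (deleteEdges_adj.mpr ⟨hr, he⟩)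
  · by_cases he : s(t, r) = s(p, q)
    · exact key t r r' hr hr' hrr' he
    by_cases he' : s(t, r') = s(p, q)
    · exact (key t r' r hr' hr hrr'.symm he').symm
    rw [Function.update_of_ne he, Function.update_of_ne he']
    exact h₂ t r r' (deleteEdges_adj.mpr ⟨hr, he⟩) (deleteEdges_adj.mpr ⟨hr', he'⟩) hrr'

theorem recolor [DecidableEq V] (hc : IsProperEdgeColoring H k c) (hp : α ∈ missing H k c p)
    (hq : α ∈ missing H k c q) : IsProperEdgeColoring H k (Function.update c s(p, q) α) :=
  (hc.mono (H.deleteEdges_le _)).update (missing_anti (H.deleteEdges_le _) hp)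
    (missing_anti (H.deleteEdges_le _) hq)

end IsProperEdgeColoring

theorem missing_update_of_notMem [DecidableEq V] {e : Sym2 V} (ht : t ∉ e) :
    missing H k (Function.update c e α) t = missing H k c t :=
  missing_congr fun q _ =>
    Function.update_of_ne (by rintro rfl; exact ht (Sym2.mem_mk_left t q)) _ _

theorem missing_deleteEdges_update_of_notMem [DecidableEq V] {e f : Sym2 V} (he : t ∉ e)
    (hf : t ∉ f) : missing (G.deleteEdges {e}) k (Function.update c f α) t =
      missing (G.deleteEdges {f}) k c t := by
  have hne : ∀ {q} {g : Sym2 V}, t ∉ g → s(t, q) ≠ g := fun ht h => ht (h ▸ Sym2.mem_mk_left _ _)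
  ext β
  simp only [missing, Set.mem_ofPred_eq, deleteEdges_adj, Set.mem_singleton_iff, hne he, hne hf,
    Function.update_of_ne (hne hf)]

theorem mem_missing_update_self [DecidableEq V] (hc : IsProperEdgeColoring H k c)
    (hpq : H.Adj p q) (hα : α ≠ c s(p, q)) :
    c s(p, q) ∈ missing H k (Function.update c s(p, q) α) p := by
  refine ⟨hc.1 _ hpq, fun ⟨r, hr, he⟩ => ?_⟩
  by_cases hrq : s(p, r) = s(p, q)
  · rw [hrq, Function.update_self] at he
    exact hα he
  · rw [Function.update_of_ne hrq] at he
    exact hrq (by rw [hc.eq_of_color_eq hr hpq he])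

theorem exists_mem_missing_notMem (N : Finset V) (hN : ∀ q, H.Adj t q → q ∈ N) (S : Finset ℕ)
    (hk : N.card + S.card < k) : ∃ α ∈ missing H k c t, α ∉ S := by
  classical
  obtain ⟨α, hα, hαT⟩ := Finset.exists_mem_notMem_of_card_lt_card
    (s := N.image (fun q => c s(t, q)) ∪ S) (t := Finset.Icc 1 k) (by
      calc _ ≤ (N.image (fun q => c s(t, q))).card + S.card := Finset.card_union_le _ _
        _ ≤ N.card + S.card := by grw [Finset.card_image_le]
        _ < _ := by simpa using hk)
  refine ⟨α, ⟨hα, fun ⟨q, hq, he⟩ => hαT ?_⟩, fun h => hαT (Finset.mem_union_right _ h)⟩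
  exact Finset.mem_union_left _ (Finset.mem_image.mpr ⟨q, hN q hq, he⟩)

namespace SimpleGraph

variable {R : SimpleGraph V}

theorem mem_support_or_mem_support_of_adj
    (hR : ∀ t p q r, R.Adj t p → R.Adj t q → R.Adj t r → p = q ∨ p = r ∨ q = r)
    {s y z x₀ : V} (P : R.Walk s y) (Q : R.Walk s z) (hP : P.IsPath) (hQ : Q.IsPath)
    (hyz : y ≠ z) (hy : (R.neighborSet y).Subsingleton) (hz : (R.neighborSet z).Subsingleton)
    (hx₀ : R.Adj s x₀) : x₀ ∈ P.support ∨ x₀ ∈ Q.support := by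
  induction P generalizing x₀ with
  | nil =>
    cases Q with
    | nil => exact absurd rfl hyz
    | cons h Q' => exact .inr (hy h hx₀ ▸ Q'.start_mem_support.tail _)
  | cons h P' ih =>
    cases Q with
    | nil => exact .inl (hz h hx₀ ▸ P'.start_mem_support.tail _)
    | cons h' Q' =>
      rcases hR _ _ _ _ h h' hx₀ with rfl | rfl | rfl
      · rw [Walk.cons_isPath_iff] at hP hQ
        exact ((ih Q' hP.1 hQ.1 hyz hy h.symm).elim hP.2 hQ.2).elim
      · exact .inl (P'.start_mem_support.tail _)
      · exact .inr (Q'.start_mem_support.tail _)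

theorem not_reachable_of_subsingleton_neighborSet
    (hR : ∀ t p q r, R.Adj t p → R.Adj t q → R.Adj t r → p = q ∨ p = r ∨ q = r)
    {x y z : V} (hxy : x ≠ y) (hxz : x ≠ z) (hyz : y ≠ z)
    (hx : (R.neighborSet x).Subsingleton) (hy : (R.neighborSet y).Subsingleton)
    (hz : (R.neighborSet z).Subsingleton) (h : R.Reachable x y) : ¬ R.Reachable x z := by
  classical
  rintro ⟨Q⟩
  obtain ⟨P⟩ := h
  obtain ⟨P, hP⟩ := P.toPath
  obtain ⟨Q, hQ⟩ := Q.toPath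
  cases P with
  | nil => exact hxy rfl
  | cons h P' =>
    cases Q with
    | nil => exact hxz rfl
    | cons h' Q' =>
      obtain rfl := hx h h'
      rw [Walk.cons_isPath_iff] at hP hQ
      exact (mem_support_or_mem_support_of_adj hR P' Q' hP.1 hQ.1 hyz hy hz h.symm).elim hP.2 hQ.2

end SimpleGraph

theorem swap_apply_mem_iff {β : Type*} [DecidableEq β] {s : Finset β} {a b x : β} (ha : a ∈ s)
    (hb : b ∈ s) : Equiv.swap a b x ∈ s ↔ x ∈ s := by
  rw [Equiv.swap_apply_def]
  split_ifs <;> simp_all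

/-- Its components are the `(a, b)`-Kempe chains. -/
def kempeGraph (H : SimpleGraph V) (c : Sym2 V → ℕ) (a b : ℕ) : SimpleGraph V where
  Adj p q := H.Adj p q ∧ (c s(p, q) = a ∨ c s(p, q) = b)
  symm := ⟨fun _ _ h => ⟨h.1.symm, by rw [Sym2.eq_swap]; exact h.2⟩⟩
  loopless := ⟨fun p h => H.loopless.irrefl p h.1⟩

open Classical in
/-- Interchanges `a` and `b` on the Kempe chain through `v₀`; the other edges at the chain keep
their colors, which `swap a b` fixes. -/
noncomputable def kempeSwap (H : SimpleGraph V) (c : Sym2 V → ℕ) (a b : ℕ) (v₀ : V) :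
    Sym2 V → ℕ :=
  fun e => if ∃ p ∈ e, (kempeGraph H c a b).Reachable v₀ p then Equiv.swap a b (c e) else c e

section Kempe

variable {v₀ : V}

theorem kempeGraph_adj :
    (kempeGraph H c a b).Adj p q ↔ H.Adj p q ∧ (c s(p, q) = a ∨ c s(p, q) = b) :=
  Iff.rfl

theorem kempeGraph_adj_trichotomy (hc : IsProperEdgeColoring H k c) (t p q r : V)
    (hp : (kempeGraph H c a b).Adj t p) (hq : (kempeGraph H c a b).Adj t q)
    (hr : (kempeGraph H c a b).Adj t r) : p = q ∨ p = r ∨ q = r := by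
  rw [kempeGraph_adj] at hp hq hr
  by_contra! ⟨hpq, hpr, hqr⟩
  have h₁ := mt (hc.eq_of_color_eq hp.1 hq.1) hpq
  have h₂ := mt (hc.eq_of_color_eq hp.1 hr.1) hpr
  have h₃ := mt (hc.eq_of_color_eq hq.1 hr.1) hqr
  rcases hp.2 with h₄ | h₄ <;> rcases hq.2 with h₅ | h₅ <;> rcases hr.2 with h₆ | h₆ <;>
    simp_all

theorem neighborSet_kempeGraph_subsingleton (hc : IsProperEdgeColoring H k c)
    (ht : a ∈ missing H k c t ∨ b ∈ missing H k c t) :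
    ((kempeGraph H c a b).neighborSet t).Subsingleton := by
  intro p hp q hq
  obtain ⟨hp, hpc⟩ := kempeGraph_adj.mp hp
  obtain ⟨hq, hqc⟩ := kempeGraph_adj.mp hq
  refine hc.eq_of_color_eq hp hq ?_
  rcases ht with ht | ht
  · exact (hpc.resolve_left (color_ne_of_mem_missing ht hp)).trans
      (hqc.resolve_left (color_ne_of_mem_missing ht hq)).symm
  · exact (hpc.resolve_right (color_ne_of_mem_missing ht hp)).trans
      (hqc.resolve_right (color_ne_of_mem_missing ht hq)).symm

theorem not_reachable_kempeGraph (hc : IsProperEdgeColoring H k c) {x y z : V}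
    (hxy : x ≠ y) (hxz : x ≠ z) (hyz : y ≠ z) (hx : a ∈ missing H k c x ∨ b ∈ missing H k c x)
    (hy : a ∈ missing H k c y ∨ b ∈ missing H k c y)
    (hz : a ∈ missing H k c z ∨ b ∈ missing H k c z)
    (h : (kempeGraph H c a b).Reachable x y) : ¬ (kempeGraph H c a b).Reachable x z :=
  not_reachable_of_subsingleton_neighborSet (kempeGraph_adj_trichotomy hc) hxy hxz hyz
    (neighborSet_kempeGraph_subsingleton hc hx) (neighborSet_kempeGraph_subsingleton hc hy)
    (neighborSet_kempeGraph_subsingleton hc hz) h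

theorem kempeSwap_apply_of_reachable (ht : (kempeGraph H c a b).Reachable v₀ t) :
    kempeSwap H c a b v₀ s(t, q) = Equiv.swap a b (c s(t, q)) :=
  if_pos ⟨t, Sym2.mem_mk_left t q, ht⟩

theorem kempeSwap_apply_of_not_reachable (ht : ¬ (kempeGraph H c a b).Reachable v₀ t)
    (hq : H.Adj t q) : kempeSwap H c a b v₀ s(t, q) = c s(t, q) := by
  unfold kempeSwap
  split_ifs with h
  · obtain ⟨p, hp, hr⟩ := h
    rcases Sym2.mem_iff.mp hp with rfl | rfl
    · exact absurd hr ht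
    by_cases hab : c s(t, p) = a ∨ c s(t, p) = b
    · exact absurd (hr.trans (Adj.reachable ⟨hq.symm, by rwa [Sym2.eq_swap]⟩)) ht
    exact Equiv.swap_apply_of_ne_of_ne (not_or.mp hab).1 (not_or.mp hab).2
  · rfl

theorem kempeSwap_apply_of_ne {e : Sym2 V} (ha : c e ≠ a) (hb : c e ≠ b) :
    kempeSwap H c a b v₀ e = c e := by
  unfold kempeSwap
  split_ifs
  exacts [Equiv.swap_apply_of_ne_of_ne ha hb, rfl]

theorem IsProperEdgeColoring.kempeSwap (hc : IsProperEdgeColoring H k c)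
    (ha : a ∈ Finset.Icc 1 k) (hb : b ∈ Finset.Icc 1 k) :
    IsProperEdgeColoring H k (kempeSwap H c a b v₀) := by
  obtain ⟨h₁, h₂⟩ := isProperEdgeColoring_iff.mp hc
  refine isProperEdgeColoring_iff.mpr ⟨fun p q hpq => ?_, fun t p q hp hq hpq => ?_⟩
  · by_cases hr : (kempeGraph H c a b).Reachable v₀ p
    · rw [kempeSwap_apply_of_reachable hr]
      exact (swap_apply_mem_iff ha hb).mpr (h₁ p q hpq)
    · rw [kempeSwap_apply_of_not_reachable hr hpq]
      exact h₁ p q hpq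
  · by_cases hr : (kempeGraph H c a b).Reachable v₀ t
    · rw [kempeSwap_apply_of_reachable hr, kempeSwap_apply_of_reachable hr]
      exact (Equiv.swap a b).injective.ne (h₂ t p q hp hq hpq)
    · rw [kempeSwap_apply_of_not_reachable hr hp, kempeSwap_apply_of_not_reachable hr hq]
      exact h₂ t p q hp hq hpq

theorem missing_kempeSwap_of_not_reachable (ht : ¬ (kempeGraph H c a b).Reachable v₀ t) :
    missing H k (kempeSwap H c a b v₀) t = missing H k c t :=
  missing_congr fun _ hq => kempeSwap_apply_of_not_reachable ht hq

theorem mem_missing_kempeSwap_of_reachable (ha : a ∈ Finset.Icc 1 k) (hb : b ∈ Finset.Icc 1 k)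
    (ht : (kempeGraph H c a b).Reachable v₀ t) :
    α ∈ missing H k (kempeSwap H c a b v₀) t ↔ Equiv.swap a b α ∈ missing H k c t := by
  refine and_congr (swap_apply_mem_iff ha hb).symm (not_congr (exists_congr fun q => ?_))
  rw [kempeSwap_apply_of_reachable ht, Equiv.swap_apply_eq_iff]

theorem mem_missing_kempeSwap_of_ne (ha : a ∈ Finset.Icc 1 k) (hb : b ∈ Finset.Icc 1 k)
    (hαa : α ≠ a) (hαb : α ≠ b) :
    α ∈ missing H k (kempeSwap H c a b v₀) t ↔ α ∈ missing H k c t := by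
  by_cases ht : (kempeGraph H c a b).Reachable v₀ t
  · rw [mem_missing_kempeSwap_of_reachable ha hb ht, Equiv.swap_apply_of_ne_of_ne hαa hαb]
  · rw [missing_kempeSwap_of_not_reachable ht]

end Kempe

section Critical

variable {u v : V}

theorem disjoint_missing_of_not_edgeColorable (hNC : ¬ EdgeColorable G k)
    (hc : IsProperEdgeColoring (G.deleteEdges {s(u, v)}) k c) :
    Disjoint (missing (G.deleteEdges {s(u, v)}) k c u)
      (missing (G.deleteEdges {s(u, v)}) k c v) := by
  classical
  exact Set.disjoint_left.mpr fun _ hu hv => hNC ⟨_, hc.update hu hv⟩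

/-- Otherwise swapping the chain at `u` makes `b` missing at both ends of `uv`. -/
theorem reachable_kempeGraph_of_not_edgeColorable (hNC : ¬ EdgeColorable G k)
    (hc : IsProperEdgeColoring (G.deleteEdges {s(u, v)}) k c)
    (ha : a ∈ missing (G.deleteEdges {s(u, v)}) k c u)
    (hb : b ∈ missing (G.deleteEdges {s(u, v)}) k c v) :
    (kempeGraph (G.deleteEdges {s(u, v)}) c a b).Reachable u v := by
  by_contra hr
  refine Set.disjoint_left.mp
    (disjoint_missing_of_not_edgeColorable hNC (hc.kempeSwap ha.1 hb.1 (v₀ := u))) ?_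
    (by rwa [missing_kempeSwap_of_not_reachable hr])
  rwa [mem_missing_kempeSwap_of_reachable ha.1 hb.1 .rfl, Equiv.swap_apply_right]

theorem exists_mem_missing_of_degree_lt [G.LocallyFinite] (h : H ≤ G)
    (hdeg : G.degree t < k) : ∃ α, α ∈ missing H k c t := by
  obtain ⟨α, hα, -⟩ := exists_mem_missing_notMem (G.neighborFinset t)
    (fun q hq => (G.mem_neighborFinset t q).mpr (h hq)) ∅ (by simpa using hdeg)
  exact ⟨α, hα⟩

theorem exists_mem_missing_deleteEdges [G.LocallyFinite] (huv : G.Adj u v) (S : Finset ℕ)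
    (hdeg : G.degree v + S.card ≤ k) :
    ∃ α ∈ missing (G.deleteEdges {s(u, v)}) k c v, α ∉ S := by
  classical
  have hu : u ∈ G.neighborFinset v := (G.mem_neighborFinset v u).mpr huv.symm
  refine exists_mem_missing_notMem ((G.neighborFinset v).erase u) (fun q hq => ?_) S ?_
  · obtain ⟨hq, hne⟩ := deleteEdges_adj.mp hq
    refine Finset.mem_erase.mpr ⟨?_, (G.mem_neighborFinset v q).mpr hq⟩
    rintro rfl
    exact hne Sym2.eq_swap
  · have := (G.degree_pos_iff_exists_adj v).mpr ⟨u, huv.symm⟩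
    rw [Finset.card_erase_of_mem hu, card_neighborFinset_eq_degree]
    omega

end Critical

/-- A Kierstead path `y₀, y₁, y₂` for the uncolored edge `y₀y₁` of `G` and the coloring `c` of
`G - y₀y₁`. The defining condition `c(y₁y₂) ∈ φ̄(y₀) ∪ φ̄(y₁)` is stated without `φ̄(y₁)`, which
never contains the color of an edge at `y₁`. -/
structure IsKiersteadPath₃ (G : SimpleGraph V) (k : ℕ) (c : Sym2 V → ℕ) (y₀ y₁ y₂ : V) :
    Prop where
  adj₀₁ : G.Adj y₀ y₁
  adj₁₂ : G.Adj y₁ y₂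
  ne₀₂ : y₀ ≠ y₂
  proper : IsProperEdgeColoring (G.deleteEdges {s(y₀, y₁)}) k c
  mem₁₂ : c s(y₁, y₂) ∈ missing (G.deleteEdges {s(y₀, y₁)}) k c y₀

/-- A Kierstead path `y₀, y₁, y₂, y₃`; as above, `φ̄(y₂)` is left out of the condition on
`c(y₂y₃)`. -/
structure IsKiersteadPath₄ (G : SimpleGraph V) (k : ℕ) (c : Sym2 V → ℕ) (y₀ y₁ y₂ y₃ : V) : Prop
    extends IsKiersteadPath₃ G k c y₀ y₁ y₂ where
  adj₂₃ : G.Adj y₂ y₃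
  ne₀₃ : y₀ ≠ y₃
  ne₁₃ : y₁ ≠ y₃
  mem₂₃ : c s(y₂, y₃) ∈ missing (G.deleteEdges {s(y₀, y₁)}) k c y₀ ∪
    missing (G.deleteEdges {s(y₀, y₁)}) k c y₁

section Kierstead

variable {y₀ y₁ y₂ y₃ v₀ : V}

local notation "𝓜" => missing (G.deleteEdges {s(y₀, y₁)}) k

namespace IsKiersteadPath₃

theorem deleteEdges_adj₁₂ (hK : IsKiersteadPath₃ G k c y₀ y₁ y₂) :
    (G.deleteEdges {s(y₀, y₁)}).Adj y₁ y₂ :=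
  deleteEdges_adj_of_notMem hK.adj₁₂ (by simp [hK.adj₀₁.ne, hK.ne₀₂])

theorem kempeSwap_of_ne (hK : IsKiersteadPath₃ G k c y₀ y₁ y₂) (ha : a ∈ Finset.Icc 1 k)
    (hb : b ∈ Finset.Icc 1 k) (hβa : c s(y₁, y₂) ≠ a) (hβb : c s(y₁, y₂) ≠ b) :
    IsKiersteadPath₃ G k (kempeSwap (G.deleteEdges {s(y₀, y₁)}) c a b v₀) y₀ y₁ y₂ :=
  { hK with
    proper := hK.proper.kempeSwap ha hb
    mem₁₂ := by
      rw [kempeSwap_apply_of_ne hβa hβb, mem_missing_kempeSwap_of_ne ha hb hβa hβb]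
      exact hK.mem₁₂ }

/-- Recoloring `y₁y₂` with a color missing at both ends frees its old color at `y₀` and `y₁`. -/
theorem disjoint_missing₁₂ (hNC : ¬ EdgeColorable G k) (hK : IsKiersteadPath₃ G k c y₀ y₁ y₂) :
    Disjoint (𝓜 c y₁) (𝓜 c y₂) := by
  classical
  refine Set.disjoint_left.mpr fun α h₁ h₂ => ?_
  have hadj := hK.deleteEdges_adj₁₂
  refine Set.disjoint_left.mp (disjoint_missing_of_not_edgeColorable hNC (hK.proper.recolor h₁ h₂))
    ?_ (mem_missing_update_self hK.proper hadj (color_ne_of_mem_missing h₁ hadj).symm)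
  rw [missing_update_of_notMem (by simp [Sym2.mem_iff, hK.adj₀₁.ne, hK.ne₀₂])]
  exact hK.mem₁₂

/-- Take `δ` missing at `y₁`. The `(α, δ)`-chain through `y₀` also contains `y₁`, so it avoids
`y₂`; swapping the chain at `y₂` makes `δ` missing at both `y₁` and `y₂`. -/
theorem disjoint_missing₀₂ [G.LocallyFinite] (hNC : ¬ EdgeColorable G k)
    (hK : IsKiersteadPath₃ G k c y₀ y₁ y₂) (hdeg : G.degree y₁ ≤ k) :
    Disjoint (𝓜 c y₀) (𝓜 c y₂) := by
  refine Set.disjoint_left.mpr fun α h₀ h₂ => ?_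
  have hadj := hK.deleteEdges_adj₁₂
  obtain ⟨δ, hδ, -⟩ := exists_mem_missing_deleteEdges (c := c) hK.adj₀₁ ∅ (by simpa using hdeg)
  have hR₁ := reachable_kempeGraph_of_not_edgeColorable hNC hK.proper h₀ hδ
  have hR₂ := not_reachable_kempeGraph hK.proper hK.adj₀₁.ne hK.ne₀₂ hK.adj₁₂.ne (.inl h₀)
    (.inr hδ) (.inl h₂) hR₁
  have hK' := hK.kempeSwap_of_ne (v₀ := y₂) h₀.1 hδ.1 (color_ne_of_mem_missing' h₂ hadj)
    (color_ne_of_mem_missing hδ hadj)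
  have hδ₁ : δ ∈ 𝓜 (kempeSwap (G.deleteEdges {s(y₀, y₁)}) c α δ y₂) y₁ := by
    rwa [missing_kempeSwap_of_not_reachable fun h => hR₂ (hR₁.trans h.symm)]
  have hδ₂ : δ ∈ 𝓜 (kempeSwap (G.deleteEdges {s(y₀, y₁)}) c α δ y₂) y₂ := by
    rwa [mem_missing_kempeSwap_of_reachable h₀.1 hδ.1 .rfl, Equiv.swap_apply_right]
  exact Set.disjoint_left.mp (hK'.disjoint_missing₁₂ hNC) hδ₁ hδ₂

theorem proper_shift [DecidableEq V] (hK : IsKiersteadPath₃ G k c y₀ y₁ y₂) :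
    IsProperEdgeColoring (G.deleteEdges {s(y₁, y₂)}) k
      (Function.update c s(y₀, y₁) (c s(y₁, y₂))) := by
  have hle := deleteEdges_mono (s := {s(y₀, y₁)}) (G.deleteEdges_le {s(y₁, y₂)})
  refine (hK.proper.mono hle).update (missing_anti hle hK.mem₁₂) ⟨hK.mem₁₂.1, ?_⟩
  rintro ⟨q, hq, he⟩
  simp only [deleteEdges_adj, Set.mem_singleton_iff] at hq
  exact hq.1.2 (by rw [hK.proper.eq_of_color_eq (deleteEdges_adj.mpr ⟨hq.1.1, hq.2⟩)
    hK.deleteEdges_adj₁₂ he])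

theorem missing_shift [DecidableEq V] (hK : IsKiersteadPath₃ G k c y₀ y₁ y₂) :
    missing (G.deleteEdges {s(y₁, y₂)}) k (Function.update c s(y₀, y₁) (c s(y₁, y₂))) y₁ =
      𝓜 c y₁ := by
  ext α
  simp only [missing, Set.mem_ofPred_eq, deleteEdges_adj, Set.mem_singleton_iff]
  refine and_congr_right fun _ => not_congr ⟨?_, ?_⟩
  · rintro ⟨q, ⟨hq, hne⟩, rfl⟩
    by_cases hq₀ : q = y₀
    · refine ⟨y₂, ⟨hK.adj₁₂, by simp [hK.adj₀₁.ne.symm, hK.ne₀₂.symm]⟩, ?_⟩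
      rw [hq₀, Sym2.eq_swap (a := y₁) (b := y₀), Function.update_self]
    · have hne' : s(y₁, q) ≠ s(y₀, y₁) := by simp [hq₀, hK.adj₀₁.ne.symm]
      exact ⟨q, ⟨hq, hne'⟩, (Function.update_of_ne hne' _ _).symm⟩
  · rintro ⟨q, ⟨hq, hne⟩, rfl⟩
    by_cases hq₂ : q = y₂
    · refine ⟨y₀, ⟨hK.adj₀₁.symm, by simp [hK.adj₀₁.ne, hK.ne₀₂]⟩, ?_⟩
      rw [hq₂, Sym2.eq_swap (a := y₁) (b := y₀), Function.update_self]
    · have hne' : s(y₁, q) ≠ s(y₁, y₂) := by rwa [Ne, Sym2.congr_right]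
      exact ⟨q, ⟨hq, hne'⟩, Function.update_of_ne hne _ _⟩

end IsKiersteadPath₃

namespace IsKiersteadPath₄

theorem deleteEdges_adj₂₃ (hK : IsKiersteadPath₄ G k c y₀ y₁ y₂ y₃) :
    (G.deleteEdges {s(y₀, y₁)}).Adj y₂ y₃ :=
  deleteEdges_adj_of_notMem hK.adj₂₃ (by simp [hK.ne₀₂, hK.ne₀₃])

theorem kempeSwap_of_ne (hK : IsKiersteadPath₄ G k c y₀ y₁ y₂ y₃) (ha : a ∈ Finset.Icc 1 k)
    (hb : b ∈ Finset.Icc 1 k) (hβa : c s(y₁, y₂) ≠ a) (hβb : c s(y₁, y₂) ≠ b)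
    (hγa : c s(y₂, y₃) ≠ a) (hγb : c s(y₂, y₃) ≠ b) :
    IsKiersteadPath₄ G k (kempeSwap (G.deleteEdges {s(y₀, y₁)}) c a b v₀) y₀ y₁ y₂ y₃ :=
  { hK.toIsKiersteadPath₃.kempeSwap_of_ne ha hb hβa hβb, hK with
    mem₂₃ := by
      simp only [Set.mem_union, kempeSwap_apply_of_ne hγa hγb,
        mem_missing_kempeSwap_of_ne ha hb hγa hγb]
      exact hK.mem₂₃ }

/-- Swapping the `(a, b)`-chain through `y₀` and `y₁` applies `swap a b` to the missing sets at
`y₀` and `y₁` and to the colors of the edges of the chain. -/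
theorem kempeSwap₀₁ (hK : IsKiersteadPath₄ G k c y₀ y₁ y₂ y₃) (ha : a ∈ 𝓜 c y₀)
    (hb : b ∈ 𝓜 c y₁) (hR : (kempeGraph (G.deleteEdges {s(y₀, y₁)}) c a b).Reachable y₀ y₁) :
    IsKiersteadPath₄ G k (kempeSwap (G.deleteEdges {s(y₀, y₁)}) c a b y₀) y₀ y₁ y₂ y₃ := by
  have hmem : ∀ γ, Equiv.swap a b γ ∈ 𝓜 c y₀ ∪ 𝓜 c y₁ →
      γ ∈ 𝓜 (kempeSwap (G.deleteEdges {s(y₀, y₁)}) c a b y₀) y₀ ∪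
        𝓜 (kempeSwap (G.deleteEdges {s(y₀, y₁)}) c a b y₀) y₁ := by
    intro γ hγ
    rwa [Set.mem_union, mem_missing_kempeSwap_of_reachable ha.1 hb.1 .rfl,
      mem_missing_kempeSwap_of_reachable ha.1 hb.1 hR]
  refine { hK with proper := hK.proper.kempeSwap ha.1 hb.1, mem₁₂ := ?_, mem₂₃ := ?_ }
  · rw [kempeSwap_apply_of_reachable hR, mem_missing_kempeSwap_of_reachable ha.1 hb.1 .rfl,
      Equiv.swap_apply_self]
    exact hK.mem₁₂
  by_cases hR₂ : (kempeGraph (G.deleteEdges {s(y₀, y₁)}) c a b).Reachable y₀ y₂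
  · rw [kempeSwap_apply_of_reachable hR₂]
    exact hmem _ (by rw [Equiv.swap_apply_self]; exact hK.mem₂₃)
  · rw [kempeSwap_apply_of_not_reachable hR₂ hK.deleteEdges_adj₂₃]
    refine hmem _ ?_
    rw [Equiv.swap_apply_def]
    split_ifs with h₁ h₂
    exacts [.inr hb, .inl ha, hK.mem₂₃]

/-- Recoloring `y₂y₃` with a common missing color frees `c(y₂y₃)` at `y₂`, against the
elementarity of the Kierstead path `y₀, y₁, y₂`. -/
theorem disjoint_missing₂₃ [G.LocallyFinite] (hNC : ¬ EdgeColorable G k)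
    (hK : IsKiersteadPath₄ G k c y₀ y₁ y₂ y₃) (hdeg : G.degree y₁ ≤ k) :
    Disjoint (𝓜 c y₂) (𝓜 c y₃) := by
  classical
  refine Set.disjoint_left.mpr fun α h₂ h₃ => ?_
  have hadj := hK.deleteEdges_adj₂₃
  have hγ₂ : c s(y₂, y₃) ∈ 𝓜 (Function.update c s(y₂, y₃) α) y₂ :=
    mem_missing_update_self hK.proper hadj (color_ne_of_mem_missing h₂ hadj).symm
  have h₀ : 𝓜 (Function.update c s(y₂, y₃) α) y₀ = 𝓜 c y₀ :=
    missing_update_of_notMem (by simp [hK.ne₀₂, hK.ne₀₃])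
  have h₁ : 𝓜 (Function.update c s(y₂, y₃) α) y₁ = 𝓜 c y₁ :=
    missing_update_of_notMem (by simp [hK.adj₁₂.ne, hK.ne₁₃])
  have hK' : IsKiersteadPath₃ G k (Function.update c s(y₂, y₃) α) y₀ y₁ y₂ :=
    { hK with
      proper := hK.proper.recolor h₂ h₃
      mem₁₂ := by
        rw [h₀, Function.update_of_ne (by simp [hK.ne₁₃, hK.adj₁₂.ne])]
        exact hK.mem₁₂ }
  rcases hK.mem₂₃ with hγ | hγ
  · exact Set.disjoint_left.mp (hK'.disjoint_missing₀₂ hNC hdeg) (h₀ ▸ hγ) hγ₂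
  · exact Set.disjoint_left.mp (hK'.disjoint_missing₁₂ hNC) (h₁ ▸ hγ) hγ₂

/-- With `τ` missing at `y₂`, the `(α, τ)`-chain from `y₂` misses `y₁` or `y₃`; swapping it
makes `α` missing at `y₂` and at that vertex. -/
theorem disjoint_missing₁₃_of_degree₂_lt [G.LocallyFinite] (hNC : ¬ EdgeColorable G k)
    (hK : IsKiersteadPath₄ G k c y₀ y₁ y₂ y₃) (hdeg₁ : G.degree y₁ ≤ k)
    (hdeg₂ : G.degree y₂ < k) : Disjoint (𝓜 c y₁) (𝓜 c y₃) := by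
  refine Set.disjoint_left.mpr fun α h₁ h₃ => ?_
  obtain ⟨τ, hτ⟩ := exists_mem_missing_of_degree_lt (c := c) (G.deleteEdges_le _) hdeg₂
  have hadj₁₂ := hK.deleteEdges_adj₁₂
  have hadj₂₃ := hK.deleteEdges_adj₂₃
  have hK' := hK.kempeSwap_of_ne (v₀ := y₂) h₁.1 hτ.1 (color_ne_of_mem_missing h₁ hadj₁₂)
    (color_ne_of_mem_missing' hτ hadj₁₂) (color_ne_of_mem_missing' h₃ hadj₂₃)
    (color_ne_of_mem_missing hτ hadj₂₃)
  have hα₂ : α ∈ 𝓜 (kempeSwap (G.deleteEdges {s(y₀, y₁)}) c α τ y₂) y₂ := by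
    rwa [mem_missing_kempeSwap_of_reachable h₁.1 hτ.1 .rfl, Equiv.swap_apply_left]
  by_cases hR₃ : (kempeGraph (G.deleteEdges {s(y₀, y₁)}) c α τ).Reachable y₂ y₃
  · have hR₁ := not_reachable_kempeGraph hK.proper hK.adj₂₃.ne hK.adj₁₂.ne.symm hK.ne₁₃.symm
      (.inr hτ) (.inl h₃) (.inl h₁) hR₃
    have hα₁ : α ∈ 𝓜 (kempeSwap (G.deleteEdges {s(y₀, y₁)}) c α τ y₂) y₁ := by
      rwa [missing_kempeSwap_of_not_reachable hR₁]
    exact Set.disjoint_left.mp (hK'.disjoint_missing₁₂ hNC) hα₁ hα₂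
  · have hα₃ : α ∈ 𝓜 (kempeSwap (G.deleteEdges {s(y₀, y₁)}) c α τ y₂) y₃ := by
      rwa [missing_kempeSwap_of_not_reachable hR₃]
    exact Set.disjoint_left.mp (hK'.disjoint_missing₂₃ hNC hdeg₁) hα₂ hα₃

theorem shift [DecidableEq V] (hK : IsKiersteadPath₄ G k c y₀ y₁ y₂ y₃)
    (hγ : c s(y₂, y₃) ∈ 𝓜 c y₁) :
    IsKiersteadPath₃ G k (Function.update c s(y₀, y₁) (c s(y₁, y₂))) y₁ y₂ y₃ where
  adj₀₁ := hK.adj₁₂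
  adj₁₂ := hK.adj₂₃
  ne₀₂ := hK.ne₁₃
  proper := hK.proper_shift
  mem₁₂ := by
    rw [hK.missing_shift, Function.update_of_ne (by simp [hK.ne₀₂.symm, hK.adj₁₂.ne.symm])]
    exact hγ

/-- After the shift, `y₁, y₂, y₃` is a Kierstead path of `G - y₁y₂` and the missing sets at `y₁`
and `y₃` are unchanged. -/
theorem disjoint_missing₁₃_of_mem₁ [G.LocallyFinite] (hNC : ¬ EdgeColorable G k)
    (hK : IsKiersteadPath₄ G k c y₀ y₁ y₂ y₃) (hdeg₂ : G.degree y₂ ≤ k)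
    (hγ : c s(y₂, y₃) ∈ 𝓜 c y₁) : Disjoint (𝓜 c y₁) (𝓜 c y₃) := by
  classical
  have h := (hK.shift hγ).disjoint_missing₀₂ hNC hdeg₂
  rwa [hK.missing_shift, missing_deleteEdges_update_of_notMem
    (by simp [hK.ne₁₃.symm, hK.adj₂₃.ne.symm]) (by simp [hK.ne₀₃.symm, hK.ne₁₃.symm])] at h

/-- The `(α, δ)`-chain through `y₀` and `y₁` avoids `y₃`, which also misses `α`. -/
theorem kempeSwap₀₃ {δ : ℕ} (hNC : ¬ EdgeColorable G k) (hK : IsKiersteadPath₄ G k c y₀ y₁ y₂ y₃)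
    (h₀ : α ∈ 𝓜 c y₀) (h₃ : α ∈ 𝓜 c y₃) (hδ : δ ∈ 𝓜 c y₁) :
    IsKiersteadPath₄ G k (kempeSwap (G.deleteEdges {s(y₀, y₁)}) c α δ y₀) y₀ y₁ y₂ y₃ ∧
      α ∈ 𝓜 (kempeSwap (G.deleteEdges {s(y₀, y₁)}) c α δ y₀) y₁ ∧
      α ∈ 𝓜 (kempeSwap (G.deleteEdges {s(y₀, y₁)}) c α δ y₀) y₃ := by
  have hR₁ := reachable_kempeGraph_of_not_edgeColorable hNC hK.proper h₀ hδ
  have hR₃ := not_reachable_kempeGraph hK.proper hK.adj₀₁.ne hK.ne₀₃ hK.ne₁₃ (.inl h₀) (.inr hδ)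
    (.inl h₃) hR₁
  refine ⟨hK.kempeSwap₀₁ h₀ hδ hR₁, ?_, ?_⟩
  · rwa [mem_missing_kempeSwap_of_reachable h₀.1 hδ.1 hR₁, Equiv.swap_apply_left]
  · rwa [missing_kempeSwap_of_not_reachable hR₃]

theorem disjoint_missing₀₃_of_mem₁ [G.LocallyFinite] (hNC : ¬ EdgeColorable G k)
    (hK : IsKiersteadPath₄ G k c y₀ y₁ y₂ y₃) (hdeg₁ : G.degree y₁ < k)
    (hdeg₂ : G.degree y₂ ≤ k) (hγ : c s(y₂, y₃) ∈ 𝓜 c y₁) : Disjoint (𝓜 c y₀) (𝓜 c y₃) := by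
  refine Set.disjoint_left.mpr fun α h₀ h₃ => ?_
  obtain ⟨δ, hδ, hδγ⟩ := exists_mem_missing_deleteEdges (c := c) hK.adj₀₁ {c s(y₂, y₃)}
    (by simpa using hdeg₁)
  obtain ⟨hK', h₁', h₃'⟩ := hK.kempeSwap₀₃ hNC h₀ h₃ hδ
  have hγα : c s(y₂, y₃) ≠ α := color_ne_of_mem_missing' h₃ hK.deleteEdges_adj₂₃
  have hγδ : c s(y₂, y₃) ≠ δ := fun h => hδγ (by simp [h])
  refine Set.disjoint_left.mp (hK'.disjoint_missing₁₃_of_mem₁ hNC hdeg₂ ?_) h₁' h₃'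
  rw [kempeSwap_apply_of_ne hγα hγδ, mem_missing_kempeSwap_of_ne h₀.1 hδ.1 hγα hγδ]
  exact hγ

/-- If `c(y₂y₃)` is missing at `y₀`, swapping the `(c(y₂y₃), α)`-chain through `y₀` and `y₁`
moves it to `y₁` and `α` to `y₀`. -/
theorem disjoint_missing₁₃_of_degree₁_lt [G.LocallyFinite] (hNC : ¬ EdgeColorable G k)
    (hK : IsKiersteadPath₄ G k c y₀ y₁ y₂ y₃) (hdeg₁ : G.degree y₁ < k)
    (hdeg₂ : G.degree y₂ ≤ k) : Disjoint (𝓜 c y₁) (𝓜 c y₃) := by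
  refine Set.disjoint_left.mpr fun α h₁ h₃ => ?_
  rcases hK.mem₂₃ with hγ | hγ
  · have hadj := hK.deleteEdges_adj₂₃
    have hR₁ := reachable_kempeGraph_of_not_edgeColorable hNC hK.proper hγ h₁
    have hR₃ := not_reachable_kempeGraph hK.proper hK.adj₀₁.ne hK.ne₀₃ hK.ne₁₃ (.inl hγ)
      (.inr h₁) (.inr h₃) hR₁
    have hR₂ : ¬ (kempeGraph (G.deleteEdges {s(y₀, y₁)}) c (c s(y₂, y₃)) α).Reachable y₀ y₂ :=
      fun h => hR₃ (h.trans (Adj.reachable (kempeGraph_adj.mpr ⟨hadj, .inl rfl⟩)))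
    have hγ₁ : c s(y₂, y₃) ∈ 𝓜 (kempeSwap (G.deleteEdges {s(y₀, y₁)}) c (c s(y₂, y₃)) α y₀) y₁ := by
      rw [mem_missing_kempeSwap_of_reachable hγ.1 h₁.1 hR₁, Equiv.swap_apply_left]
      exact h₁
    have hα₀ : α ∈ 𝓜 (kempeSwap (G.deleteEdges {s(y₀, y₁)}) c (c s(y₂, y₃)) α y₀) y₀ := by
      rwa [mem_missing_kempeSwap_of_reachable hγ.1 h₁.1 .rfl, Equiv.swap_apply_right]
    have hα₃ : α ∈ 𝓜 (kempeSwap (G.deleteEdges {s(y₀, y₁)}) c (c s(y₂, y₃)) α y₀) y₃ := by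
      rwa [missing_kempeSwap_of_not_reachable hR₃]
    refine Set.disjoint_left.mp ((hK.kempeSwap₀₁ hγ h₁ hR₁).disjoint_missing₀₃_of_mem₁ hNC hdeg₁
      hdeg₂ ?_) hα₀ hα₃
    rwa [kempeSwap_apply_of_not_reachable hR₂ hadj]
  · exact Set.disjoint_left.mp (hK.disjoint_missing₁₃_of_mem₁ hNC hdeg₂ hγ) h₁ h₃

theorem disjoint_missing₁₃ [G.LocallyFinite] (hNC : ¬ EdgeColorable G k)
    (hK : IsKiersteadPath₄ G k c y₀ y₁ y₂ y₃) (hdeg₁ : G.degree y₁ ≤ k)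
    (hdeg₂ : G.degree y₂ ≤ k) (hmin : min (G.degree y₁) (G.degree y₂) < k) :
    Disjoint (𝓜 c y₁) (𝓜 c y₃) := by
  rcases min_lt_iff.mp hmin with h | h
  exacts [hK.disjoint_missing₁₃_of_degree₁_lt hNC h hdeg₂,
    hK.disjoint_missing₁₃_of_degree₂_lt hNC hdeg₁ h]

theorem disjoint_missing₀₃ [G.LocallyFinite] (hNC : ¬ EdgeColorable G k)
    (hK : IsKiersteadPath₄ G k c y₀ y₁ y₂ y₃) (hdeg₁ : G.degree y₁ ≤ k)
    (hdeg₂ : G.degree y₂ ≤ k) (hmin : min (G.degree y₁) (G.degree y₂) < k) :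
    Disjoint (𝓜 c y₀) (𝓜 c y₃) := by
  refine Set.disjoint_left.mpr fun α h₀ h₃ => ?_
  obtain ⟨δ, hδ, -⟩ := exists_mem_missing_deleteEdges (c := c) hK.adj₀₁ ∅ (by simpa using hdeg₁)
  obtain ⟨hK', h₁', h₃'⟩ := hK.kempeSwap₀₃ hNC h₀ h₃ hδ
  exact Set.disjoint_left.mp (hK'.disjoint_missing₁₃ hNC hdeg₁ hdeg₂ hmin) h₁' h₃'

end IsKiersteadPath₄

end Kierstead

end

theorem stmt_8_general {V : Type*} [Fintype V] (G : SimpleGraph V) [DecidableRel G.Adj]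
    (hclass2 : chromIndex G = G.maxDegree + 1) (y0 y1 y2 y3 : V)
    (hdist : y0 ≠ y1 ∧ y0 ≠ y2 ∧ y0 ≠ y3 ∧ y1 ≠ y2 ∧ y1 ≠ y3 ∧ y2 ≠ y3)
    (h01 : G.Adj y0 y1) (h12 : G.Adj y1 y2) (h23 : G.Adj y2 y3)
    (c : Sym2 V → ℕ)
    (hc : IsProperEdgeColoring (G.deleteEdges {s(y0, y1)}) G.maxDegree c)
    (hK2 : c s(y1, y2) ∈ missing (G.deleteEdges {s(y0, y1)}) G.maxDegree c y0 ∪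
      missing (G.deleteEdges {s(y0, y1)}) G.maxDegree c y1)
    (hK3 : c s(y2, y3) ∈ missing (G.deleteEdges {s(y0, y1)}) G.maxDegree c y0 ∪
      missing (G.deleteEdges {s(y0, y1)}) G.maxDegree c y1 ∪
      missing (G.deleteEdges {s(y0, y1)}) G.maxDegree c y2)
    (hmin : min (G.degree y1) (G.degree y2) < G.maxDegree) :
    ∀ u w, u ∈ ({y0, y1, y2, y3} : Set V) → w ∈ ({y0, y1, y2, y3} : Set V) → u ≠ w →
      missing (G.deleteEdges {s(y0, y1)}) G.maxDegree c u ∩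
        missing (G.deleteEdges {s(y0, y1)}) G.maxDegree c w = ∅ := by
  obtain ⟨-, h02, h03, -, h13, -⟩ := hdist
  have hNC : ¬ EdgeColorable G G.maxDegree := fun h => by
    have : chromIndex G ≤ G.maxDegree := Nat.sInf_le h
    omega
  have hK : IsKiersteadPath₄ G G.maxDegree c y0 y1 y2 y3 :=
    { adj₀₁ := h01, adj₁₂ := h12, adj₂₃ := h23, ne₀₂ := h02, ne₀₃ := h03, ne₁₃ := h13
      proper := hc
      mem₁₂ := hK2.resolve_right fun h =>
        color_ne_of_mem_missing h (deleteEdges_adj_of_notMem h12 (by simp [h01.ne, h02])) rfl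
      mem₂₃ := hK3.resolve_right fun h =>
        color_ne_of_mem_missing h (deleteEdges_adj_of_notMem h23 (by simp [h02, h03])) rfl }
  have hΔ₁ := G.degree_le_maxDegree y1
  have hΔ₂ := G.degree_le_maxDegree y2
  have hdisj : ({y0, y1, y2, y3} : Set V).PairwiseDisjoint
      (missing (G.deleteEdges {s(y0, y1)}) G.maxDegree c) := by
    simp only [Set.pairwiseDisjoint_insert, Set.pairwiseDisjoint_singleton, Set.mem_insert_iff,
      Set.mem_singleton_iff, forall_eq_or_imp, forall_eq, true_and]
    exact ⟨⟨fun _ => hK.disjoint_missing₂₃ hNC hΔ₁, fun _ => hK.disjoint_missing₁₂ hNC,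
      fun _ => hK.disjoint_missing₁₃ hNC hΔ₁ hΔ₂ hmin⟩,
      fun _ => disjoint_missing_of_not_edgeColorable hNC hc, fun _ => hK.disjoint_missing₀₂ hNC hΔ₁,
      fun _ => hK.disjoint_missing₀₃ hNC hΔ₁ hΔ₂ hmin⟩
  exact fun u w hu hw huw => Set.disjoint_iff_inter_eq_empty.mp (hdisj hu hw huw)

/-- if `K = (y0, e1, y1, e2, y2, e3, y3)` is a Kierstead path with respect to a
critical edge `e1 = y0y1` of a Class 2 graph `G` and a proper `Δ`-edge-coloring `c` of
`G − e1`, and `min{d(y1), d(y2)} < Δ`, then `{y0, y1, y2, y3}` is elementary. -/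
theorem stmt_8 {V : Type*} [Fintype V] (G : SimpleGraph V) [DecidableRel G.Adj]
    (hclass2 : chromIndex G = G.maxDegree + 1) (y0 y1 y2 y3 : V)
    (hdist : y0 ≠ y1 ∧ y0 ≠ y2 ∧ y0 ≠ y3 ∧ y1 ≠ y2 ∧ y1 ≠ y3 ∧ y2 ≠ y3)
    (h01 : G.Adj y0 y1) (h12 : G.Adj y1 y2) (h23 : G.Adj y2 y3)
    (hcrit : chromIndex (G.deleteEdges {s(y0, y1)}) < chromIndex G)
    (c : Sym2 V → ℕ)
    (hc : IsProperEdgeColoring (G.deleteEdges {s(y0, y1)}) G.maxDegree c)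
    (hK2 : c s(y1, y2) ∈ missing (G.deleteEdges {s(y0, y1)}) G.maxDegree c y0 ∪
      missing (G.deleteEdges {s(y0, y1)}) G.maxDegree c y1)
    (hK3 : c s(y2, y3) ∈ missing (G.deleteEdges {s(y0, y1)}) G.maxDegree c y0 ∪
      missing (G.deleteEdges {s(y0, y1)}) G.maxDegree c y1 ∪
      missing (G.deleteEdges {s(y0, y1)}) G.maxDegree c y2)
    (hmin : min (G.degree y1) (G.degree y2) < G.maxDegree) :
    ∀ u w, u ∈ ({y0, y1, y2, y3} : Set V) → w ∈ ({y0, y1, y2, y3} : Set V) → u ≠ w →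
      missing (G.deleteEdges {s(y0, y1)}) G.maxDegree c u ∩
        missing (G.deleteEdges {s(y0, y1)}) G.maxDegree c w = ∅ :=
  stmt_8_general G hclass2 y0 y1 y2 y3 hdist h01 h12 h23 c hc hK2 hK3 hmin
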